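/- In the modified game G' built from a monotone cubic formula φ, if φ has no 1-in-3 satisfying assignment, then the unique ε-well-supported Nash equilibrium of G' is the pure profile in which every player plays Out. -/

import Mathlib

namespace Stmt7

/-- A monotone cubic formula with exactly three distinct variables per clause. -/
structure CubicFormula (V C : Type) where
  var : C → Fin 3 → V
  inj : ∀ c, Function.Injective (var c)

variable {V C : Type} [Fintype V] [Fintype C] [DecidableEq V] [DecidableEq C]

/-- α is a 1-in-3 satisfying assignment: exactly one variable per clause is true. -/
def OneInThree (F : CubicFormula V C) (α : V → Bool) : Prop :=
  ∀ c : C, (Finset.univ.filter (fun j : Fin 3 => α (F.var c j) = true)).card = 1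

/-- Each variable occurs in exactly three clause positions (the formula is cubic). -/
def Cubic (F : CubicFormula V C) : Prop :=
  ∀ v : V, (Finset.univ.filter (fun cj : C × Fin 3 => F.var cj.1 cj.2 = v)).card = 3

/-- The bipartite interaction graph between variable players and clause players. -/
def interactionGraph (F : CubicFormula V C) : SimpleGraph (V ⊕ C) :=
  SimpleGraph.fromRel (fun a b =>
    match a, b with
    | Sum.inl v, Sum.inr c => ∃ j, F.var c j = v
    | _, _ => False)

/-- Payoff to clause player `c_j` on the edge with its `j`-th variable, when the clause
plays `s` (`none` = Out) and the variable plays `b` (`none` = Out). -/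
noncomputable def edgeClausePay (cc κ : ℝ) (j : Fin 3) (s : Option (Fin 3)) (b : Option Bool) : ℝ :=
  match s, b with
  | none, _ => 1 / 3
  | some t, some true => if t = j then κ else 0
  | some _, some false => cc * κ
  | some _, none => 0

/-- Payoff to the variable player on the edge where it is the `j`-th variable of a
clause playing `s`, when the variable plays `b` (`none` = Out). -/
noncomputable def edgeVarPay (ε : ℝ) (j : Fin 3) (s : Option (Fin 3)) (b : Option Bool) : ℝ :=
  match b, s with
  | none, _ => 1 / 3
  | some true, s => if s = some j then 1 / 3 - ε / 3 else 0
  | some false, some t => if t = j then 0 else 1 / 3 - ε / 3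
  | some false, none => 0

/-- Payoff of clause player `c` for pure strategy `s`, against the variable players'
mixed strategies `p`. -/
noncomputable def clausePure (F : CubicFormula V C) (cc κ : ℝ) (p : V → Option Bool → ℝ) (c : C)
    (s : Option (Fin 3)) : ℝ :=
  ∑ j : Fin 3, ∑ b : Option Bool, p (F.var c j) b * edgeClausePay cc κ j s b

/-- Payoff of variable player `v` for pure strategy `b`, against the clause players'
mixed strategies `q`. -/
noncomputable def varPure (F : CubicFormula V C) (ε : ℝ) (q : C → Option (Fin 3) → ℝ) (v : V)
    (b : Option Bool) : ℝ :=
  ∑ c : C, ∑ j : Fin 3, ∑ s : Option (Fin 3),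
    (if F.var c j = v then q c s * edgeVarPay ε j s b else 0)

/-- A valid mixed strategy profile of the game G'. -/
def IsProfile (p : V → Option Bool → ℝ) (q : C → Option (Fin 3) → ℝ) : Prop :=
  (∀ v b, 0 ≤ p v b) ∧ (∀ v, ∑ b, p v b = 1) ∧
  (∀ c s, 0 ≤ q c s) ∧ (∀ c, ∑ s, q c s = 1)

/-- An ε-well-supported Nash equilibrium of G': every pure strategy played with
positive probability is an ε-best response. -/
def IsWSNE (F : CubicFormula V C) (ε cc κ : ℝ) (p : V → Option Bool → ℝ)
    (q : C → Option (Fin 3) → ℝ) : Prop :=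
  IsProfile p q ∧
  (∀ v b, 0 < p v b → ∀ b', varPure F ε q v b ≥ varPure F ε q v b' - ε) ∧
  (∀ c s, 0 < q c s → ∀ s', clausePure F cc κ p c s ≥ clausePure F cc κ p c s' - ε)

end Stmt7

/-!
Out pays every player exactly 1. A clause player's other strategies pay at most
`κ + 2 cc κ = 1 - ε`, with equality only when its chosen variable plays True and the other two
play False surely; a variable player's True/False pays at most `(1 - ε) / 3` per clause, and
nothing against a clause playing Out. So in an ε-WSNE a clause that leaves Out pins down its
three variables, and a variable that leaves Out keeps its three clauses away from Out. Along the
connected interaction graph one such player makes every clause leave Out, and the variables'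
forced choices are then a 1-in-3 satisfying assignment.
-/

open Finset

section StdSimplex

variable {α : Type*} [Fintype α] {q f : α → ℝ} {M : ℝ}

theorem sum_mul_le_of_mem_stdSimplex (hq : q ∈ stdSimplex ℝ α) (hf : ∀ a, f a ≤ M) :
    ∑ a, q a * f a ≤ M :=
  calc ∑ a, q a * f a ≤ ∑ a, q a * M :=
        sum_le_sum fun a _ => mul_le_mul_of_nonneg_left (hf a) (hq.1 a)
    _ = M := by rw [← sum_mul, hq.2, one_mul]

theorem eq_zero_of_le_sum_mul_of_mem_stdSimplex (hq : q ∈ stdSimplex ℝ α) (hf : ∀ a, f a ≤ M)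
    (h : M ≤ ∑ a, q a * f a) {a : α} (ha : f a < M) : q a = 0 := by
  have hterm : ∀ b ∈ univ, 0 ≤ q b * (M - f b) := fun b _ =>
    mul_nonneg (hq.1 b) (sub_nonneg.2 (hf b))
  have hsum : ∑ b, q b * (M - f b) = 0 := by
    refine le_antisymm ?_ (sum_nonneg hterm)
    simp only [mul_sub, sum_sub_distrib, ← sum_mul, hq.2, one_mul]
    linarith
  have ha0 := (sum_eq_zero_iff_of_nonneg hterm).1 hsum a (mem_univ a)
  exact (mul_eq_zero.1 ha0).resolve_right (sub_pos.2 ha).ne'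

theorem eq_one_of_le_sum_mul_of_mem_stdSimplex (hq : q ∈ stdSimplex ℝ α) {a₀ : α}
    (hf : ∀ a, f a ≤ M) (hlt : ∀ a ≠ a₀, f a < M) (h : M ≤ ∑ a, q a * f a) : q a₀ = 1 := by
  rw [← hq.2, Fintype.sum_eq_single a₀ fun a ha =>
    eq_zero_of_le_sum_mul_of_mem_stdSimplex hq hf h (hlt a ha)]

theorem eq_zero_of_mem_stdSimplex_of_eq_one [DecidableEq α] (hq : q ∈ stdSimplex ℝ α) {a b : α}
    (ha : q a = 1) (hb : b ≠ a) : q b = 0 := by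
  have hsum := add_sum_erase univ q (mem_univ a)
  rw [hq.2, ha, add_eq_left] at hsum
  exact (sum_eq_zero_iff_of_nonneg fun c _ => hq.1 c).1 hsum b (mem_erase.2 ⟨hb, mem_univ b⟩)

theorem exists_pos_some_of_mem_stdSimplex {q : Option α → ℝ} (hq : q ∈ stdSimplex ℝ (Option α))
    (h : q none ≠ 1) : ∃ a, 0 < q (some a) := by
  by_contra! hle
  have hsum := hq.2
  rw [Fintype.sum_option, sum_eq_zero fun a _ => le_antisymm (hle a) (hq.1 _), add_zero] at hsum
  exact h hsum

theorem ite_none_mem_stdSimplex :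
    (fun s : Option α => if s = none then (1 : ℝ) else 0) ∈ stdSimplex ℝ (Option α) :=
  ⟨fun s => by positivity, by rw [Fintype.sum_option]; simp⟩

end StdSimplex

theorem SimpleGraph.Preconnected.forall_of_adj_imp {W : Type*} {G : SimpleGraph W}
    (hG : G.Preconnected) {P : W → Prop} (hP : ∀ x y, G.Adj x y → P x → P y) {x : W}
    (hx : P x) (y : W) : P y := by
  obtain ⟨w⟩ := hG x y
  induction w with
  | nil => exact hx
  | cons hadj _ ih => exact ih (hP _ _ hadj hx)

namespace Stmt7

section Game

variable {V C : Type} (F : CubicFormula V C) {ε cc κ : ℝ} {p : V → Option Bool → ℝ}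
  {q : C → Option (Fin 3) → ℝ}

def occurrences [Fintype C] [DecidableEq V] (v : V) : Finset (C × Fin 3) :=
  univ.filter fun cj => F.var cj.1 cj.2 = v

theorem clausePure_none (hp : ∀ v, p v ∈ stdSimplex ℝ (Option Bool)) (c : C) :
    clausePure F cc κ p c none = 1 := by
  simp [clausePure, edgeClausePay, ← sum_mul, (hp _).2]

theorem varPure_eq_sum_occurrences [Fintype C] [DecidableEq V] (q : C → Option (Fin 3) → ℝ) (v : V)
    (b : Option Bool) :
    varPure F ε q v b =
      ∑ cj ∈ occurrences F v, ∑ s, q cj.1 s * edgeVarPay ε cj.2 s b := by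
  rw [varPure, occurrences, sum_filter, Fintype.sum_prod_type]
  exact sum_congr rfl fun c _ => sum_congr rfl fun j _ => by split_ifs <;> simp

theorem varPure_none [Fintype C] [DecidableEq V] (hcub : Cubic F)
    (hq : ∀ c, q c ∈ stdSimplex ℝ (Option (Fin 3))) (v : V) : varPure F ε q v none = 1 := by
  have hcard : #(occurrences F v) = 3 := hcub v
  simp [varPure_eq_sum_occurrences, edgeVarPay, ← sum_mul, (hq _).2, hcard]

theorem edgeVarPay_none_some (j : Fin 3) (b : Bool) : edgeVarPay ε j none (some b) = 0 := by
  cases b <;> simp [edgeVarPay]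

theorem edgeVarPay_some_le (hε : ε ≤ 1) (j : Fin 3) (s : Option (Fin 3)) (b : Bool) :
    edgeVarPay ε j s (some b) ≤ 1 / 3 - ε / 3 := by
  rcases b with _ | _ <;> rcases s with _ | t <;> simp only [edgeVarPay] <;> (try split_ifs) <;>
    linarith

theorem eq_zero_of_le_varPure [Fintype C] [DecidableEq V] (hcub : Cubic F) (hε : ε < 1)
    (hq : ∀ c, q c ∈ stdSimplex ℝ (Option (Fin 3))) {v : V} {b : Bool}
    (h : 1 - ε ≤ varPure F ε q v (some b)) {c : C} {j : Fin 3} (hcj : F.var c j = v) :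
    q c none = 0 := by
  have hle : ∀ cj ∈ occurrences F v,
      ∑ s, q cj.1 s * edgeVarPay ε cj.2 s (some b) ≤ 1 / 3 - ε / 3 := fun cj _ =>
    sum_mul_le_of_mem_stdSimplex (hq _) fun s => edgeVarPay_some_le hε.le _ s b
  have hcard : #(occurrences F v) = 3 := hcub v
  have hmax : ∑ _cj ∈ occurrences F v, (1 / 3 - ε / 3) = 1 - ε := by
    rw [sum_const, hcard]; norm_num; ring
  rw [varPure_eq_sum_occurrences, ← hmax] at h
  have hcj' : (c, j) ∈ occurrences F v := mem_filter.2 ⟨mem_univ _, hcj⟩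
  have hedge := (sum_eq_sum_iff_of_le hle).1 (le_antisymm (sum_le_sum hle) h) _ hcj'
  refine eq_zero_of_le_sum_mul_of_mem_stdSimplex (hq c) (fun s => edgeVarPay_some_le hε.le j s b)
    hedge.ge ?_
  rw [edgeVarPay_none_some]
  linarith

theorem edgeClausePay_some_le (hcc0 : 0 ≤ cc) (hcc1 : cc ≤ 1) (hκ : 0 ≤ κ) (j t : Fin 3)
    (b : Option Bool) : edgeClausePay cc κ j (some t) b ≤ if t = j then κ else cc * κ := by
  rcases b with _ | _ | _ <;> simp only [edgeClausePay] <;> split_ifs <;> nlinarith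

theorem edgeClausePay_some_lt (hcc0 : 0 < cc) (hcc1 : cc < 1) (hκ : 0 < κ) {j t : Fin 3}
    {b : Option Bool} (hb : b ≠ some (decide (t = j))) :
    edgeClausePay cc κ j (some t) b < if t = j then κ else cc * κ := by
  rcases b with _ | _ | _ <;> simp only [edgeClausePay] <;> split_ifs <;> simp_all

theorem eq_one_of_le_clausePure (hcc0 : 0 < cc) (hcc1 : cc < 1) (hκ : 0 < κ)
    (hp : ∀ v, p v ∈ stdSimplex ℝ (Option Bool)) {c : C} {t : Fin 3}
    (h : κ + 2 * cc * κ ≤ clausePure F cc κ p c (some t)) (j : Fin 3) :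
    p (F.var c j) (some (decide (t = j))) = 1 := by
  have hedge_le := edgeClausePay_some_le hcc0.le hcc1.le hκ.le
  have hle : ∀ j ∈ univ, ∑ b, p (F.var c j) b * edgeClausePay cc κ j (some t) b ≤
      if t = j then κ else cc * κ := fun j _ =>
    sum_mul_le_of_mem_stdSimplex (hp _) (hedge_le j t)
  have hmax : ∑ j : Fin 3, (if t = j then κ else cc * κ) = κ + 2 * cc * κ := by
    fin_cases t <;> simp [Fin.sum_univ_three] <;> ring
  rw [← hmax] at h
  have hedge := (sum_eq_sum_iff_of_le hle).1 (le_antisymm (sum_le_sum hle) h) j (mem_univ j)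
  exact eq_one_of_le_sum_mul_of_mem_stdSimplex (hp _) (hedge_le j t)
    (fun b hb => edgeClausePay_some_lt hcc0 hcc1 hκ hb) hedge.ge

theorem IsProfile.var_mem_stdSimplex (h : IsProfile p q) (v : V) :
    p v ∈ stdSimplex ℝ (Option Bool) :=
  ⟨h.1 v, h.2.1 v⟩

theorem IsProfile.clause_mem_stdSimplex (h : IsProfile p q) (c : C) :
    q c ∈ stdSimplex ℝ (Option (Fin 3)) :=
  ⟨h.2.2.1 c, h.2.2.2 c⟩

theorem isWSNE_allOut [Fintype C] [DecidableEq V] (hcub : Cubic F) (hε : 0 < ε) :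
    IsWSNE F ε cc κ (fun _ b => if b = none then 1 else 0)
      (fun _ s => if s = none then 1 else 0) := by
  refine ⟨⟨fun _ => ite_none_mem_stdSimplex.1, fun _ => ite_none_mem_stdSimplex.2,
    fun _ => ite_none_mem_stdSimplex.1, fun _ => ite_none_mem_stdSimplex.2⟩, ?_, ?_⟩
  · intro v b hb b'
    obtain rfl : b = none := by by_contra hne; simp [hne] at hb
    rcases b' with _ | b'
    · linarith
    · rw [varPure_none F hcub (fun _ => ite_none_mem_stdSimplex) v]
      simp [varPure, edgeVarPay_none_some]
      linarith
  · intro c s hs s'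
    obtain rfl : s = none := by by_contra hne; simp [hne] at hs
    rcases s' with _ | t
    · linarith
    · rw [clausePure_none F (fun _ => ite_none_mem_stdSimplex) c]
      simp [clausePure, edgeClausePay]
      linarith

theorem IsWSNE.eq_zero_of_var_pos [Fintype C] [DecidableEq V] (h : IsWSNE F ε cc κ p q)
    (hcub : Cubic F) (hε : ε < 1) {v : V} {b : Bool} (hb : 0 < p v (some b)) {c : C} {j : Fin 3}
    (hcj : F.var c j = v) : q c none = 0 := by
  have hq := h.1.clause_mem_stdSimplex
  refine eq_zero_of_le_varPure F hcub hε hq (b := b) ?_ hcj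
  linarith [h.2.1 v _ hb none, varPure_none F (ε := ε) hcub hq v]

theorem IsWSNE.eq_one_of_clause_pos [Fintype C] [DecidableEq V] (h : IsWSNE F ε cc κ p q)
    (hcc0 : 0 < cc) (hcc1 : cc < 1) (hκ : 0 < κ) (hκε : κ + 2 * cc * κ = 1 - ε)
    {c : C} {t : Fin 3} (ht : 0 < q c (some t)) (j : Fin 3) :
    p (F.var c j) (some (decide (t = j))) = 1 := by
  have hp := h.1.var_mem_stdSimplex
  refine eq_one_of_le_clausePure F hcc0 hcc1 hκ hp ?_ j
  linarith [h.2.2 c _ ht none, clausePure_none F (cc := cc) (κ := κ) hp c]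

variable (p q) in
def IsActive : V ⊕ C → Prop
  | .inl v => p v none ≠ 1
  | .inr c => q c none ≠ 1

theorem isActive_of_adj (hp : ∀ v, p v ∈ stdSimplex ℝ (Option Bool))
    (hq : ∀ c, q c ∈ stdSimplex ℝ (Option (Fin 3)))
    (hclause : ∀ c t, 0 < q c (some t) → ∀ j, p (F.var c j) (some (decide (t = j))) = 1)
    (hvar : ∀ v b, 0 < p v (some b) → ∀ c j, F.var c j = v → q c none = 0) {x y : V ⊕ C}
    (hxy : (interactionGraph F).Adj x y) (hx : IsActive p q x) : IsActive p q y := by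
  rcases x with v | c <;> rcases y with v' | c' <;> simp [interactionGraph] at hxy
  · obtain ⟨b, hb⟩ := exists_pos_some_of_mem_stdSimplex (hp v) hx
    obtain ⟨j, hj⟩ := hxy
    simp [IsActive, hvar v b hb c' j hj]
  · obtain ⟨t, ht⟩ := exists_pos_some_of_mem_stdSimplex (hq c) hx
    obtain ⟨j, rfl⟩ := hxy
    intro hout
    have hsome := hclause c t ht j
    rw [eq_zero_of_mem_stdSimplex_of_eq_one (hp _) hout (Option.some_ne_none _)] at hsome
    exact zero_ne_one hsome

theorem oneInThree_of_forall_active (hp : ∀ v, p v ∈ stdSimplex ℝ (Option Bool))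
    (hq : ∀ c, q c ∈ stdSimplex ℝ (Option (Fin 3)))
    (hclause : ∀ c t, 0 < q c (some t) → ∀ j, p (F.var c j) (some (decide (t = j))) = 1)
    (hactive : ∀ c, q c none ≠ 1) : OneInThree F fun v => decide (p v (some true) = 1) := by
  intro c
  obtain ⟨t, ht⟩ := exists_pos_some_of_mem_stdSimplex (hq c) (hactive c)
  have hval : ∀ j, decide (p (F.var c j) (some true) = 1) = decide (t = j) := by
    intro j
    have hj := hclause c t ht j
    by_cases htj : t = j
    · simp_all
    · rw [eq_zero_of_mem_stdSimplex_of_eq_one (hp _) hj (by simp [htj])]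
      simp [htj]
  simp [hval, filter_eq]

end Game

variable {V C : Type} [Fintype V] [Fintype C] [DecidableEq V] [DecidableEq C]

/-- If the connected cubic formula φ has no 1-in-3 satisfying assignment, then the
all-Out profile is an ε-WSNE of G' and it is the unique ε-WSNE: every ε-WSNE has
every player playing Out. -/
theorem stmt_7 (F : CubicFormula V C) (hcub : Cubic F)
    (hconn : (interactionGraph F).Connected)
    (hno : ¬∃ α : V → Bool, OneInThree F α)
    (ε cc κ : ℝ) (hε0 : 0 < ε) (hε1 : ε < 1)
    (hcc0 : max (1 - 3 * ε / 2) 0 < cc) (hcc1 : cc < 1)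
    (hκ : κ = (1 - ε) / (1 + 2 * cc)) :
    IsWSNE F ε cc κ (fun _ b => if b = none then 1 else 0)
      (fun _ s => if s = none then 1 else 0) ∧
    ∀ (p : V → Option Bool → ℝ) (q : C → Option (Fin 3) → ℝ),
      IsWSNE F ε cc κ p q → (∀ v, p v none = 1) ∧ (∀ c, q c none = 1) := by
  have hcc : 0 < cc := (le_max_right _ _).trans_lt hcc0
  have hκ0 : 0 < κ := hκ ▸ div_pos (by linarith) (by linarith)
  have hκε : κ + 2 * cc * κ = 1 - ε := by rw [hκ]; field_simp
  refine ⟨isWSNE_allOut F hcub hε0, fun p q h => ?_⟩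
  have hp := h.1.var_mem_stdSimplex
  have hq := h.1.clause_mem_stdSimplex
  have hclause : ∀ c t, 0 < q c (some t) → ∀ j, p (F.var c j) (some (decide (t = j))) = 1 :=
    fun _ _ ht => h.eq_one_of_clause_pos F hcc hcc1 hκ0 hκε ht
  have hvar : ∀ v b, 0 < p v (some b) → ∀ c j, F.var c j = v → q c none = 0 :=
    fun _ _ hb _ _ => h.eq_zero_of_var_pos F hcub hε1 hb
  have hinactive : ∀ x, ¬IsActive p q x := fun x hx =>
    hno ⟨_, oneInThree_of_forall_active F hp hq hclause fun c =>
      hconn.preconnected.forall_of_adj_imp (fun _ _ => isActive_of_adj F hp hq hclause hvar) hx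
        (.inr c)⟩
  exact ⟨fun v => not_not.1 (hinactive (.inl v)), fun c => not_not.1 (hinactive (.inr c))⟩

end Stmt7
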